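/- arXiv:0806.0434 — 3 statements merged into one kernel-verified Lean document; each statement's English description precedes it below -/
import Mathlib

section
/- Let n ≥ 3 be odd. Then the f-polynomials satisfy the polynomial identity x · P_{n+1}(x) = (1 + x) · P_n(x) − (2/(n+1)) · C(n−1, (n−1)/2). -/
open Finset Polynomial

def IsPermOn (n : ℕ) (σ : ℕ → ℕ) : Prop :=
  Set.BijOn σ (Set.Icc 1 n) (Set.Icc 1 n)

def CP (n : ℕ) (σ : ℕ → ℕ) : Finset ℕ :=
  ((Finset.Icc 2 (n - 1)).filter (fun i => σ (i - 1) < σ i ∧ σ (i + 1) < σ i)).image σ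

open scoped Classical in
noncomputable def Pn (n : ℕ) : Finset (Finset ℕ) :=
  (Finset.Icc 1 n).powerset.filter (fun S => ∃ σ : ℕ → ℕ, IsPermOn n σ ∧ CP n σ = S)

noncomputable def pcount (n k : ℕ) : ℕ :=
  ((Pn n).filter (fun S => S.card = k)).card

noncomputable def fpoly (n : ℕ) : Polynomial ℚ :=
  ∑ i ∈ Finset.range ((n - 1) / 2 + 1),
    Polynomial.C (pcount n i : ℚ) * Polynomial.X ^ ((n - 1) / 2 - i)

lemma necessity {n : ℕ} {σ : ℕ → ℕ} (hσ : IsPermOn n σ) {s : ℕ} (hs : s ∈ CP n σ) :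
    2 * ((CP n σ).filter (· ≤ s)).card < s := by
  classical
  set Ppos := (Finset.Icc 2 (n - 1)).filter (fun i => σ (i - 1) < σ i ∧ σ (i + 1) < σ i) with hP
  have hPicc : ∀ i ∈ Ppos, 2 ≤ i ∧ i ≤ n - 1 ∧ 3 ≤ n := by
    intro i hi
    have h := Finset.mem_Icc.mp (Finset.mem_filter.mp hi).1
    exact ⟨h.1, h.2, by omega⟩
  set T := Ppos.filter (fun i => σ i ≤ s) with hT
  obtain ⟨i0, hi0, hi0s⟩ : ∃ i ∈ Ppos, σ i = s := by
    simpa [CP, hP] using hs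
  have hi0T : i0 ∈ T := Finset.mem_filter.mpr ⟨hi0, by simp [hi0s]⟩
  have hTne : T.Nonempty := ⟨i0, hi0T⟩
  have hTP : ∀ i ∈ T, i ∈ Ppos := fun i hi => (Finset.mem_filter.mp hi).1
  have hTpeak : ∀ i ∈ T, σ (i - 1) < σ i ∧ σ (i + 1) < σ i ∧ σ i ≤ s := by
    intro i hi
    have h1 := (Finset.mem_filter.mp (hTP i hi)).2
    exact ⟨h1.1, h1.2, (Finset.mem_filter.mp hi).2⟩
  -- the filtered CP is contained in the image of T
  have hsub : (CP n σ).filter (· ≤ s) ⊆ T.image σ := by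
    intro a ha
    have h1 := Finset.mem_filter.mp ha
    obtain ⟨i, hi, rfl⟩ : ∃ i ∈ Ppos, σ i = a := by
      simpa [CP, hP] using h1.1
    exact Finset.mem_image.mpr ⟨i, Finset.mem_filter.mpr ⟨hi, by simpa using h1.2⟩, rfl⟩
  have hcard1 : ((CP n σ).filter (· ≤ s)).card ≤ T.card :=
    le_trans (Finset.card_le_card hsub) Finset.card_image_le
  -- build U
  set m0 := T.min' hTne with hm0
  have hm0T : m0 ∈ T := T.min'_mem hTne
  have hm0ge : 2 ≤ m0 := (hPicc m0 (hTP m0 hm0T)).1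
  set U := (T ∪ T.image (· + 1)) ∪ {m0 - 1} with hU
  have hdisj1 : Disjoint T (T.image (· + 1)) := by
    rw [Finset.disjoint_left]
    intro x hx hx'
    obtain ⟨t, ht, rfl⟩ := Finset.mem_image.mp hx'
    have p1 := hTpeak t ht
    have p2 := hTpeak _ hx
    have : σ (t + 1 - 1) < σ (t + 1) := p2.1
    simp only [Nat.add_sub_cancel] at this
    omega
  have hdisj2 : Disjoint (T ∪ T.image (· + 1)) {m0 - 1} := by
    rw [Finset.disjoint_right]
    intro x hx hx'
    simp only [Finset.mem_singleton] at hx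
    subst hx
    rcases Finset.mem_union.mp hx' with h | h
    · have := T.min'_le _ h
      omega
    · obtain ⟨t, ht, heq⟩ := Finset.mem_image.mp h
      have := T.min'_le _ ht
      omega
  have hcardU : U.card = 2 * T.card + 1 := by
    rw [hU, Finset.card_union_of_disjoint hdisj2, Finset.card_union_of_disjoint hdisj1,
      Finset.card_image_of_injective _ (add_left_injective 1), Finset.card_singleton]
    omega
  -- all elements of U have values in Icc 1 s and are in Icc 1 n
  have hval : ∀ u ∈ U, u ∈ Finset.Icc 1 n ∧ σ u ∈ Finset.Icc 1 s := by
    intro u hu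
    have hmaps := hσ.mapsTo
    have key : u ∈ Finset.Icc 1 n ∧ σ u ≤ s := by
      rcases Finset.mem_union.mp hu with h | h
      · rcases Finset.mem_union.mp h with h | h
        · have hic := hPicc u (hTP u h)
          exact ⟨Finset.mem_Icc.mpr ⟨by omega, by omega⟩, (hTpeak u h).2.2⟩
        · obtain ⟨t, ht, rfl⟩ := Finset.mem_image.mp h
          have hic := hPicc t (hTP t ht)
          have hp := hTpeak t ht
          exact ⟨Finset.mem_Icc.mpr ⟨by omega, by omega⟩, by omega⟩
      · simp only [Finset.mem_singleton] at h
        subst h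
        have hic := hPicc m0 (hTP m0 hm0T)
        have hp := hTpeak m0 hm0T
        have : σ (m0 - 1) < σ m0 := hp.1
        exact ⟨Finset.mem_Icc.mpr ⟨by omega, by omega⟩, by omega⟩
    have hσu : σ u ∈ Set.Icc 1 n := hmaps (by
      have := Finset.mem_Icc.mp key.1
      exact Set.mem_Icc.mpr this)
    exact ⟨key.1, Finset.mem_Icc.mpr ⟨(Set.mem_Icc.mp hσu).1, key.2⟩⟩
  have hinj : Set.InjOn σ ↑U := by
    intro x hx y hy hxy
    have hx' := (hval x hx).1
    have hy' := (hval y hy).1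
    exact hσ.injOn (Set.mem_Icc.mpr (Finset.mem_Icc.mp hx'))
      (Set.mem_Icc.mpr (Finset.mem_Icc.mp hy')) hxy
  have himg : U.image σ ⊆ Finset.Icc 1 s := fun y hy => by
    obtain ⟨u, hu, rfl⟩ := Finset.mem_image.mp hy
    exact (hval u hu).2
  have : U.card ≤ s := by
    calc U.card = (U.image σ).card := (Finset.card_image_of_injOn hinj).symm
    _ ≤ (Finset.Icc 1 s).card := Finset.card_le_card himg
    _ = s := by rw [Nat.card_Icc]; omega
  omega

lemma sufficiency {n : ℕ} {S : Finset ℕ} (hsub : S ⊆ Finset.Icc 1 n)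
    (hcond : ∀ s ∈ S, 2 * (S.filter (· ≤ s)).card < s) :
    ∃ σ : ℕ → ℕ, IsPermOn n σ ∧ CP n σ = S := by
  classical
  set k := S.card with hk
  set Sc := Finset.Icc 1 n \ S with hSc
  have hkn' : k ≤ n := by
    rw [hk]
    calc S.card ≤ (Finset.Icc 1 n).card := Finset.card_le_card hsub
    _ = n := by rw [Nat.card_Icc]; omega
  have hScc : Sc.card = n - k := by
    rw [hSc, Finset.card_sdiff_of_subset hsub, Nat.card_Icc, hk]; omega
  set l := S.orderEmbOfFin hk.symm with hl
  set t := Sc.orderEmbOfFin hScc with ht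
  set fL : ℕ → ℕ := fun j => if h : j < k then l ⟨j, h⟩ else 0 with hfL
  set fC : ℕ → ℕ := fun j => if h : j < n - k then t ⟨j, h⟩ else 0 with hfC
  have fL_mem : ∀ j, j < k → fL j ∈ S := by
    intro j h
    simp only [hfL, dif_pos h]
    exact S.orderEmbOfFin_mem hk.symm ⟨j, h⟩
  have fC_mem : ∀ j, j < n - k → fC j ∈ Sc := by
    intro j h
    simp only [hfC, dif_pos h]
    exact Sc.orderEmbOfFin_mem hScc ⟨j, h⟩
  have fL_mono : ∀ a b, a < b → b < k → fL a < fL b := by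
    intro a b hab hb
    simp only [hfL, dif_pos hb, dif_pos (lt_trans hab hb)]
    exact l.lt_iff_lt.mpr (by exact hab)
  have fC_mono : ∀ a b, a < b → b < n - k → fC a < fC b := by
    intro a b hab hb
    simp only [hfC, dif_pos hb, dif_pos (lt_trans hab hb)]
    exact t.lt_iff_lt.mpr (by exact hab)
  have fL_surj : ∀ y ∈ S, ∃ j, j < k ∧ fL j = y := by
    intro y hy
    have : y ∈ Set.range l := by rw [Finset.range_orderEmbOfFin]; exact hy
    obtain ⟨⟨j, hj⟩, hje⟩ := this
    exact ⟨j, hj, by simp only [hfL, dif_pos hj]; exact hje⟩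
  have fC_surj : ∀ y ∈ Sc, ∃ j, j < n - k ∧ fC j = y := by
    intro y hy
    have : y ∈ Set.range t := by rw [Finset.range_orderEmbOfFin]; exact hy
    obtain ⟨⟨j, hj⟩, hje⟩ := this
    exact ⟨j, hj, by simp only [hfC, dif_pos hj]; exact hje⟩
  have fL_inj : ∀ a b, a < k → b < k → fL a = fL b → a = b := by
    intro a b ha hb he
    rcases Nat.lt_trichotomy a b with h | h | h
    · have := fL_mono a b h hb; omega
    · exact h
    · have := fL_mono b a h ha; omega
  have fC_inj : ∀ a b, a < n - k → b < n - k → fC a = fC b → a = b := by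
    intro a b ha hb he
    rcases Nat.lt_trichotomy a b with h | h | h
    · have := fC_mono a b h hb; omega
    · exact h
    · have := fC_mono b a h ha; omega
  -- rank computation
  have rank : ∀ j, j < k → (S.filter (· ≤ fL j)).card = j + 1 := by
    intro j hj
    have himg : S.filter (· ≤ fL j) = (Finset.range (j + 1)).image fL := by
      ext x
      simp only [Finset.mem_filter, Finset.mem_image, Finset.mem_range]
      constructor
      · rintro ⟨hxS, hxle⟩
        obtain ⟨a, ha, rfl⟩ := fL_surj x hxS
        refine ⟨a, ?_, rfl⟩
        by_contra hac
        have := fL_mono j a (by omega) ha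
        omega
      · rintro ⟨a, ha, rfl⟩
        have hak : a < k := by omega
        refine ⟨fL_mem a hak, ?_⟩
        rcases Nat.lt_or_ge a j with h | h
        · exact le_of_lt (fL_mono a j h hj)
        · have : a = j := by omega
          subst this; exact le_refl _
    rw [himg, Finset.card_image_of_injOn, Finset.card_range]
    intro a ha b hb hab
    simp only [Finset.coe_range, Set.mem_Iio] at ha hb
    exact fL_inj a b (by omega) (by omega) hab
  have fL_big : ∀ j, j < k → 2 * j + 2 < fL j := by
    intro j hj
    have := hcond _ (fL_mem j hj)
    rw [rank j hj] at this
    omega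
  have hfLn : ∀ j, j < k → fL j ≤ n := fun j hj => (Finset.mem_Icc.mp (hsub (fL_mem j hj))).2
  have hfL1 : ∀ j, j < k → 1 ≤ fL j := fun j hj => (Finset.mem_Icc.mp (hsub (fL_mem j hj))).1
  have hkn : k = 0 ∨ 2 * k + 1 ≤ n := by
    rcases Nat.eq_zero_or_pos k with h | h
    · exact Or.inl h
    · right
      have h1 := fL_big (k - 1) (by omega)
      have h2 := hfLn (k - 1) (by omega)
      omega
  -- the key inequality
  have key : ∀ i j, i < k → j < n - k → j ≤ i + 1 → fC j < fL i := by
    intro i j hi hj hji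
    have hfn := hfLn i hi
    have h1 : (Finset.Icc 1 n).filter (· < fL i) = Finset.Icc 1 (fL i - 1) := by
      ext x
      simp only [Finset.mem_filter, Finset.mem_Icc]
      omega
    have h2 : ((Finset.Icc 1 n).filter (· < fL i)).card = fL i - 1 := by
      rw [h1, Nat.card_Icc]; omega
    have hun : S ∪ Sc = Finset.Icc 1 n := Finset.union_sdiff_of_subset hsub
    have h3 : (S.filter (· < fL i)).card + (Sc.filter (· < fL i)).card = fL i - 1 := by
      rw [← h2, ← hun, Finset.filter_union]
      have hdisj : Disjoint (S.filter (· < fL i)) (Sc.filter (· < fL i)) :=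
        Finset.disjoint_filter_filter
          ((Finset.sdiff_disjoint (s := S) (t := Finset.Icc 1 n)).symm)
      exact (Finset.card_union_of_disjoint hdisj).symm
    have h4 : (S.filter (· < fL i)).card = i := by
      have hins : S.filter (· ≤ fL i) = insert (fL i) (S.filter (· < fL i)) := by
        ext x
        simp only [Finset.mem_filter, Finset.mem_insert]
        constructor
        · rintro ⟨hx, hxle⟩
          rcases Nat.lt_or_ge x (fL i) with h | h
          · exact Or.inr ⟨hx, h⟩
          · exact Or.inl (by omega)
        · rintro (rfl | ⟨hx, hxlt⟩)
          · exact ⟨fL_mem i hi, le_refl _⟩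
          · exact ⟨hx, le_of_lt hxlt⟩
      have hni : fL i ∉ S.filter (· < fL i) := by
        simp only [Finset.mem_filter]
        omega
      have := rank i hi
      rw [hins, Finset.card_insert_of_notMem hni] at this
      omega
    have hbig := fL_big i hi
    by_contra hcon
    push_neg at hcon
    have hsubb : Sc.filter (· < fL i) ⊆ (Finset.range j).image fC := by
      intro x hx
      have hx' := Finset.mem_filter.mp hx
      obtain ⟨a, ha, rfl⟩ := fC_surj x hx'.1
      refine Finset.mem_image.mpr ⟨a, Finset.mem_range.mpr ?_, rfl⟩
      by_contra haj
      have hja : fC j ≤ fC a := by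
        rcases Nat.lt_or_ge j a with h | h
        · exact le_of_lt (fC_mono j a h ha)
        · have : a = j := by omega
          subst this; exact le_refl _
      have := hx'.2
      omega
    have hc1 := Finset.card_le_card hsubb
    have hc2 : ((Finset.range j).image fC).card ≤ j := by
      calc ((Finset.range j).image fC).card ≤ (Finset.range j).card := Finset.card_image_le
      _ = j := Finset.card_range j
    omega
  -- the permutation
  set σ : ℕ → ℕ := fun p =>
    if p % 2 = 0 ∧ p ≤ 2 * k then fL (p / 2 - 1)
    else fC (if p ≤ 2 * k then (p - 1) / 2 else p - k - 1) with hσdef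
  have σL : ∀ p, p % 2 = 0 → p ≤ 2 * k → σ p = fL (p / 2 - 1) := by
    intro p h1 h2
    simp only [hσdef]
    rw [if_pos ⟨h1, h2⟩]
  have σC1 : ∀ p, p % 2 = 1 → p ≤ 2 * k → σ p = fC ((p - 1) / 2) := by
    intro p h1 h2
    simp only [hσdef]
    rw [if_neg (by omega), if_pos h2]
  have σC2 : ∀ p, 2 * k < p → σ p = fC (p - k - 1) := by
    intro p h
    simp only [hσdef]
    rw [if_neg (by omega), if_neg (by omega)]
  have hScIcc : ∀ x ∈ Sc, x ∈ Finset.Icc 1 n := fun x hx => (Finset.mem_sdiff.mp hx).1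
  -- maps to
  have hmaps : ∀ p, 1 ≤ p → p ≤ n → σ p ∈ Finset.Icc 1 n := by
    intro p h1 h2
    by_cases hL : p % 2 = 0 ∧ p ≤ 2 * k
    · rw [σL p hL.1 hL.2]
      have hidx : p / 2 - 1 < k := by omega
      exact hsub (fL_mem _ hidx)
    · have : σ p = fC (if p ≤ 2 * k then (p - 1) / 2 else p - k - 1) := by
        simp only [hσdef]; rw [if_neg hL]
      rw [this]
      have hidx : (if p ≤ 2 * k then (p - 1) / 2 else p - k - 1) < n - k := by
        split_ifs with h
        · have hk0 : k ≠ 0 := by omega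
          rcases hkn with h' | h' <;> omega
        · omega
      exact hScIcc _ (fC_mem _ hidx)
  -- injectivity
  have hinj : ∀ p q, 1 ≤ p → p ≤ n → 1 ≤ q → q ≤ n → σ p = σ q → p = q := by
    intro p q hp1 hp2 hq1 hq2 he
    by_cases hLp : p % 2 = 0 ∧ p ≤ 2 * k <;> by_cases hLq : q % 2 = 0 ∧ q ≤ 2 * k
    · rw [σL p hLp.1 hLp.2, σL q hLq.1 hLq.2] at he
      have := fL_inj _ _ (by omega) (by omega) he
      omega
    · -- p is L, q is C : contradiction
      rw [σL p hLp.1 hLp.2] at he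
      have hq : σ q = fC (if q ≤ 2 * k then (q - 1) / 2 else q - k - 1) := by
        simp only [hσdef]; rw [if_neg hLq]
      rw [hq] at he
      have hidxq : (if q ≤ 2 * k then (q - 1) / 2 else q - k - 1) < n - k := by
        split_ifs with h
        · rcases hkn with h' | h' <;> omega
        · omega
      have hmem1 := fL_mem (p / 2 - 1) (by omega)
      have hmem2 := fC_mem _ hidxq
      rw [he] at hmem1
      exact absurd hmem1 ((Finset.mem_sdiff.mp hmem2).2)
    · rw [σL q hLq.1 hLq.2] at he
      have hp' : σ p = fC (if p ≤ 2 * k then (p - 1) / 2 else p - k - 1) := by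
        simp only [hσdef]; rw [if_neg hLp]
      rw [hp'] at he
      have hidxp : (if p ≤ 2 * k then (p - 1) / 2 else p - k - 1) < n - k := by
        split_ifs with h
        · rcases hkn with h' | h' <;> omega
        · omega
      have hmem1 := fL_mem (q / 2 - 1) (by omega)
      have hmem2 := fC_mem _ hidxp
      rw [← he] at hmem1
      exact absurd hmem1 ((Finset.mem_sdiff.mp hmem2).2)
    · have hp' : σ p = fC (if p ≤ 2 * k then (p - 1) / 2 else p - k - 1) := by
        simp only [hσdef]; rw [if_neg hLp]
      have hq' : σ q = fC (if q ≤ 2 * k then (q - 1) / 2 else q - k - 1) := by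
        simp only [hσdef]; rw [if_neg hLq]
      rw [hp', hq'] at he
      have hidxp : (if p ≤ 2 * k then (p - 1) / 2 else p - k - 1) < n - k := by
        split_ifs with h
        · rcases hkn with h' | h' <;> omega
        · omega
      have hidxq : (if q ≤ 2 * k then (q - 1) / 2 else q - k - 1) < n - k := by
        split_ifs with h
        · rcases hkn with h' | h' <;> omega
        · omega
      have hidx := fC_inj _ _ hidxp hidxq he
      split_ifs at hidx with h1 h2 h3
      · omega
      · -- p ≤ 2k (odd), q > 2k: (p-1)/2 ≤ k-1 but q-k-1 ≥ k
        omega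
      · omega
      · omega
  -- surjectivity
  have hsurj : ∀ y, 1 ≤ y → y ≤ n → ∃ p, 1 ≤ p ∧ p ≤ n ∧ σ p = y := by
    intro y hy1 hy2
    by_cases hyS : y ∈ S
    · obtain ⟨j, hj, rfl⟩ := fL_surj y hyS
      refine ⟨2 * j + 2, by omega, ?_, ?_⟩
      · rcases hkn with h | h <;> omega
      · rw [σL (2 * j + 2) (by omega) (by omega)]
        congr 1
        omega
    · have hySc : y ∈ Sc := Finset.mem_sdiff.mpr ⟨Finset.mem_Icc.mpr ⟨hy1, hy2⟩, hyS⟩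
      obtain ⟨j, hj, rfl⟩ := fC_surj y hySc
      rcases Nat.lt_or_ge j k with h | h
      · refine ⟨2 * j + 1, by omega, ?_, ?_⟩
        · rcases hkn with h' | h' <;> omega
        · rw [σC1 (2 * j + 1) (by omega) (by omega)]
          congr 1
          omega
      · refine ⟨j + k + 1, by omega, by omega, ?_⟩
        · rw [σC2 (j + k + 1) (by omega)]
          congr 1
          omega
  refine ⟨σ, ⟨?_, ?_, ?_⟩, ?_⟩
  · intro p hp
    have := hmaps p (Set.mem_Icc.mp hp).1 (Set.mem_Icc.mp hp).2
    exact Set.mem_Icc.mpr (Finset.mem_Icc.mp this)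
  · intro p hp q hq he
    exact hinj p q (Set.mem_Icc.mp hp).1 (Set.mem_Icc.mp hp).2
      (Set.mem_Icc.mp hq).1 (Set.mem_Icc.mp hq).2 he
  · intro y hy
    obtain ⟨p, h1, h2, h3⟩ := hsurj y (Set.mem_Icc.mp hy).1 (Set.mem_Icc.mp hy).2
    exact ⟨p, Set.mem_Icc.mpr ⟨h1, h2⟩, h3⟩
  -- CP n σ = S
  · ext y
    simp only [CP, Finset.mem_image, Finset.mem_filter, Finset.mem_Icc]
    constructor
    · rintro ⟨i, ⟨⟨hi2, hin⟩, hpk1, hpk2⟩, rfl⟩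
      by_cases hL : i % 2 = 0 ∧ i ≤ 2 * k
      · rw [σL i hL.1 hL.2]
        exact fL_mem _ (by omega)
      · exfalso
        rcases Nat.lt_or_ge (2 * k) i with hgt | hle
        · -- i > 2k : σ i < σ (i+1), contradiction with hpk2
          rw [σC2 i hgt] at hpk2
          have hσi1 : σ (i + 1) = fC (i + 1 - k - 1) := σC2 (i + 1) (by omega)
          rw [hσi1] at hpk2
          have : fC (i - k - 1) < fC (i + 1 - k - 1) := by
            apply fC_mono _ _ (by omega)
            omega
          omega
        · -- i odd, 3 ≤ i ≤ 2k: σ (i-1) = fL ((i-1)/2 - 1) > σ i = fC ((i-1)/2)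
          have hodd : i % 2 = 1 := by omega
          rw [σC1 i hodd hle] at hpk1
          have hσi1 : σ (i - 1) = fL ((i - 1) / 2 - 1) := σL (i - 1) (by omega) (by omega)
          rw [hσi1] at hpk1
          have : fC ((i - 1) / 2) < fL ((i - 1) / 2 - 1) := by
            apply key
            · omega
            · rcases hkn with h' | h' <;> omega
            · omega
          omega
    · intro hy
      obtain ⟨j, hj, rfl⟩ := fL_surj y hy
      have hkpos : 1 ≤ k := by omega
      have h2kn : 2 * k + 1 ≤ n := by rcases hkn with h | h <;> omega
      refine ⟨2 * j + 2, ⟨⟨by omega, by omega⟩, ?_, ?_⟩, ?_⟩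
      · -- σ (2j+1) < σ (2j+2)
        have h1 : σ (2 * j + 2 - 1) = fC j := by
          rw [show 2 * j + 2 - 1 = 2 * j + 1 by omega, σC1 (2 * j + 1) (by omega) (by omega)]
          congr 1
          omega
        have h2 : σ (2 * j + 2) = fL j := by
          rw [σL (2 * j + 2) (by omega) (by omega)]
          congr 1
          omega
        rw [h1, h2]
        exact key j j hj (by omega) (by omega)
      · -- σ (2j+3) < σ (2j+2)
        have h2 : σ (2 * j + 2) = fL j := by
          rw [σL (2 * j + 2) (by omega) (by omega)]
          congr 1
          omega
        rw [h2]
        rcases Nat.lt_or_ge (2 * k) (2 * j + 3) with hgt | hle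
        · have h3 : σ (2 * j + 2 + 1) = fC (2 * j + 2 - k) := by
            rw [show 2 * j + 2 + 1 = 2 * j + 3 by omega, σC2 (2 * j + 3) hgt]
            congr 1
            omega
          rw [h3]
          exact key j (2 * j + 2 - k) hj (by omega) (by omega)
        · have h3 : σ (2 * j + 2 + 1) = fC (j + 1) := by
            rw [show 2 * j + 2 + 1 = 2 * j + 3 by omega, σC1 (2 * j + 3) (by omega) hle]
            congr 1
            omega
          rw [h3]
          exact key j (j + 1) hj (by omega) (by omega)
      · rw [σL (2 * j + 2) (by omega) (by omega)]
        congr 1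
        omega

/-! ### The good-set characterization -/

/-- The family of "good" sets: `S ⊆ [n]` such that each `s ∈ S` exceeds twice its rank. -/
noncomputable def GF (n : ℕ) : Finset (Finset ℕ) :=
  (Finset.Icc 1 n).powerset.filter (fun S => ∀ s ∈ S, 2 * (S.filter (· ≤ s)).card < s)

theorem Pn_eq (n : ℕ) : Pn n = GF n := by
  classical
  ext S
  simp only [Pn, GF, Finset.mem_filter, Finset.mem_powerset]
  constructor
  · rintro ⟨hpow, σ, hσ, rfl⟩
    exact ⟨hpow, fun s hs => necessity hσ hs⟩
  · rintro ⟨hpow, hcond⟩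
    exact ⟨hpow, sufficiency hpow hcond⟩

noncomputable def gcount (n k : ℕ) : ℕ := ((GF n).filter (fun S => S.card = k)).card

theorem pcount_eq (n k : ℕ) : pcount n k = gcount n k := by
  rw [pcount, gcount, Pn_eq]

/-! ### Counting lemmas -/

lemma gf_mem {n : ℕ} {S : Finset ℕ} : S ∈ GF n ↔ S ⊆ Icc 1 n ∧ ∀ s ∈ S, 2 * (S.filter (· ≤ s)).card < s := by
  simp [GF, Finset.mem_filter, Finset.mem_powerset]

lemma gcount_zero (n : ℕ) : gcount n 0 = 1 := by
  have : (GF n).filter (fun S => S.card = 0) = {∅} := by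
    ext S
    simp only [Finset.mem_filter, Finset.card_eq_zero, Finset.mem_singleton, gf_mem]
    constructor
    · rintro ⟨_, h⟩; exact h
    · rintro rfl; simp
  rw [gcount, this, Finset.card_singleton]

lemma gcount_eq_zero {n k : ℕ} (h : n ≤ 2 * (k + 1)) : gcount n (k + 1) = 0 := by
  rw [gcount, Finset.card_eq_zero]
  rw [Finset.filter_eq_empty_iff]
  intro S hS hcard
  have hS' := gf_mem.mp hS
  have hne : S.Nonempty := Finset.card_pos.mp (by omega)
  have hmax : S.max' hne ∈ S := S.max'_mem hne
  have h1 := hS'.2 _ hmax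
  have h2 : S.filter (· ≤ S.max' hne) = S := by
    apply Finset.filter_true_of_mem
    intro s hs; exact S.le_max' s hs
  rw [h2, hcard] at h1
  have := (Finset.mem_Icc.mp (hS'.1 hmax)).2
  omega

lemma gcount_succ {n k : ℕ} (h : 2 * (k + 1) ≤ n) :
    gcount (n + 1) (k + 1) = gcount n (k + 1) + gcount n k := by
  classical
  have key : (GF (n+1)).filter (fun S => S.card = k + 1) =
      ((GF n).filter (fun S => S.card = k + 1)) ∪
        ((GF n).filter (fun S => S.card = k)).image (insert (n+1)) := by
    ext S
    simp only [Finset.mem_filter, Finset.mem_union, Finset.mem_image, gf_mem]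
    constructor
    · rintro ⟨⟨hsub, hcond⟩, hcard⟩
      by_cases hmem : (n+1) ∈ S
      · right
        refine ⟨S.erase (n+1), ⟨⟨?_, ?_⟩, ?_⟩, ?_⟩
        · intro x hx
          have hx' := Finset.mem_of_mem_erase hx
          have h1 := Finset.mem_Icc.mp (hsub hx')
          have h2 := Finset.ne_of_mem_erase hx
          exact Finset.mem_Icc.mpr ⟨h1.1, by omega⟩
        · intro s hs
          have hs' := Finset.mem_of_mem_erase hs
          have hsne := Finset.ne_of_mem_erase hs
          have hsle := (Finset.mem_Icc.mp (hsub hs')).2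
          have hfe : (S.erase (n+1)).filter (· ≤ s) = S.filter (· ≤ s) := by
            ext x
            simp only [Finset.mem_filter, Finset.mem_erase]
            constructor
            · rintro ⟨⟨_, hx⟩, hx2⟩; exact ⟨hx, hx2⟩
            · rintro ⟨hx, hx2⟩
              refine ⟨⟨?_, hx⟩, hx2⟩
              rintro rfl; omega
          rw [hfe]; exact hcond s hs'
        · rw [Finset.card_erase_of_mem hmem, hcard]; omega
        · rw [Finset.insert_erase hmem]
      · left
        refine ⟨⟨?_, hcond⟩, hcard⟩
        intro x hx
        have := Finset.mem_Icc.mp (hsub hx)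
        have : x ≠ n + 1 := by rintro rfl; exact hmem hx
        exact Finset.mem_Icc.mpr ⟨by omega, by omega⟩
    · rintro (⟨⟨hsub, hcond⟩, hcard⟩ | ⟨T, ⟨⟨hsub, hcond⟩, hcard⟩, rfl⟩)
      · exact ⟨⟨fun x hx => Finset.mem_Icc.mpr ⟨(Finset.mem_Icc.mp (hsub hx)).1,
          le_trans (Finset.mem_Icc.mp (hsub hx)).2 (by omega)⟩, hcond⟩, hcard⟩
      · have hnm : (n+1) ∉ T := by
          intro hc; have := (Finset.mem_Icc.mp (hsub hc)).2; omega
        refine ⟨⟨?_, ?_⟩, ?_⟩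
        · intro x hx
          rcases Finset.mem_insert.mp hx with rfl | hx
          · exact Finset.mem_Icc.mpr ⟨by omega, le_refl _⟩
          · have := Finset.mem_Icc.mp (hsub hx); exact Finset.mem_Icc.mpr ⟨this.1, by omega⟩
        · intro s hs
          rcases Finset.mem_insert.mp hs with rfl | hs
          · have : (insert (n+1) T).filter (· ≤ n+1) = insert (n+1) T := by
              apply Finset.filter_true_of_mem
              intro x hx
              rcases Finset.mem_insert.mp hx with rfl | hx
              · exact le_refl _
              · exact le_trans (Finset.mem_Icc.mp (hsub hx)).2 (by omega)
            rw [this, Finset.card_insert_of_notMem hnm, hcard]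
            omega
          · have hsle := (Finset.mem_Icc.mp (hsub hs)).2
            have : (insert (n+1) T).filter (· ≤ s) = T.filter (· ≤ s) := by
              ext x
              simp only [Finset.mem_filter, Finset.mem_insert]
              constructor
              · rintro ⟨rfl | hx, hx2⟩
                · omega
                · exact ⟨hx, hx2⟩
              · rintro ⟨hx, hx2⟩; exact ⟨Or.inr hx, hx2⟩
            rw [this]; exact hcond s hs
        · rw [Finset.card_insert_of_notMem hnm, hcard]
  rw [gcount, key, Finset.card_union_of_disjoint, Finset.card_image_of_injOn]
  · rfl
  · intro a ha b hb hab
    have hna : (n+1) ∉ a := by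
      intro hc
      have := (gf_mem.mp (Finset.mem_filter.mp ha).1).1 hc
      have := (Finset.mem_Icc.mp this).2; omega
    have hnb : (n+1) ∉ b := by
      intro hc
      have := (gf_mem.mp (Finset.mem_filter.mp hb).1).1 hc
      have := (Finset.mem_Icc.mp this).2; omega
    have := congrArg (Finset.erase · (n+1)) hab
    simpa [Finset.erase_insert hna, Finset.erase_insert hnb] using this
  · rw [Finset.disjoint_left]
    rintro a ha hb
    rcases Finset.mem_image.mp hb with ⟨T, hT, rfl⟩
    have := (gf_mem.mp (Finset.mem_filter.mp ha).1).1 (Finset.mem_insert_self (n+1) T)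
    have := (Finset.mem_Icc.mp this).2; omega

lemma gcount_closed : ∀ n k : ℕ, 2 * (k + 1) ≤ n →
    gcount n (k + 1) + Nat.choose (n - 1) k = Nat.choose (n - 1) (k + 1) := by
  intro n
  induction n with
  | zero => intro k h; omega
  | succ n ih =>
    intro k h
    rcases Nat.lt_or_ge n (2 * (k + 1)) with hlt | hge
    · -- n + 1 = 2k + 2, base case
      have hn : n = 2 * k + 1 := by omega
      rw [gcount_eq_zero (by omega), zero_add, Nat.succ_sub_one, hn]
      have hsymm := Nat.choose_symm (n := 2 * k + 1) (k := k + 1) (by omega)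
      rw [show 2 * k + 1 - (k + 1) = k by omega] at hsymm
      exact hsymm
    · rw [gcount_succ hge, Nat.succ_sub_one]
      have ih1 := ih k hge
      have pascal : Nat.choose n (k + 1) = Nat.choose (n - 1) k + Nat.choose (n - 1) (k + 1) := by
        have := Nat.choose_succ_succ (n - 1) k
        simp only [Nat.succ_eq_add_one] at this
        rwa [Nat.sub_add_cancel (by omega)] at this
      cases k with
      | zero =>
        rw [gcount_zero]
        simp only [Nat.choose_zero_right] at *
        omega
      | succ j =>
        have ih2 := ih j (by omega)
        have pascal2 : Nat.choose n (j + 1) = Nat.choose (n - 1) j + Nat.choose (n - 1) (j + 1) := by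
          have := Nat.choose_succ_succ (n - 1) j
          simp only [Nat.succ_eq_add_one] at this
          rwa [Nat.sub_add_cancel (by omega)] at this
        omega

/-! ### The pcount relations -/

lemma pcount_zero (n : ℕ) : pcount n 0 = 1 := by rw [pcount_eq, gcount_zero]

lemma pcount_rec {n i : ℕ} (h1 : 1 ≤ i) (h2 : 2 * i ≤ n) :
    pcount (n + 1) i = pcount n i + pcount n (i - 1) := by
  obtain ⟨k, rfl⟩ : ∃ k, i = k + 1 := ⟨i - 1, by omega⟩
  rw [pcount_eq, pcount_eq, pcount_eq, Nat.add_sub_cancel]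
  exact gcount_succ h2

lemma pcount_top {m : ℕ} (hm : 1 ≤ m) :
    (pcount (2 * m + 1) m : ℚ) = 2 / ((2 * m + 1 : ℕ) + 1) * (Nat.choose (2 * m) m : ℚ) := by
  obtain ⟨j, rfl⟩ : ∃ j, m = j + 1 := ⟨m - 1, by omega⟩
  have hc := gcount_closed (2 * (j + 1) + 1) j (by omega)
  rw [show 2 * (j + 1) + 1 - 1 = 2 * (j + 1) by omega] at hc
  rw [pcount_eq]
  have hid := Nat.choose_succ_right_eq (2 * (j + 1)) j
  -- hid : choose (2(j+1)) (j+1) * (j+1) = choose (2(j+1)) j * (2(j+1) - j)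
  have hq : (gcount (2 * (j + 1) + 1) (j + 1) : ℚ) + (Nat.choose (2 * (j + 1)) j : ℚ)
      = (Nat.choose (2 * (j + 1)) (j + 1) : ℚ) := by exact_mod_cast hc
  have hq2 : (Nat.choose (2 * (j + 1)) (j + 1) : ℚ) * (j + 1 : ℕ)
      = (Nat.choose (2 * (j + 1)) j : ℚ) * ((j + 2 : ℕ) : ℚ) := by
    rw [show 2 * (j + 1) - j = j + 2 by omega] at hid
    exact_mod_cast hid
  push_cast at hq hq2 ⊢
  have hj2 : ((j : ℚ) + 2) ≠ 0 := by positivity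
  field_simp
  nlinarith [hq, hq2]

/-! ### Coefficients of fpoly -/

lemma fpoly_eq (n : ℕ) : fpoly n =
    ∑ i ∈ Finset.range ((n - 1) / 2 + 1),
      Polynomial.C (pcount n ((n - 1) / 2 - i) : ℚ) * Polynomial.X ^ i := by
  rw [fpoly, ← Finset.sum_range_reflect]
  apply Finset.sum_congr rfl
  intro i hi
  have hi' := Finset.mem_range.mp hi
  rw [show (n - 1) / 2 + 1 - 1 - i = (n - 1) / 2 - i by omega,
    show (n - 1) / 2 - ((n - 1) / 2 - i) = i by omega]

lemma coeff_fpoly (n d : ℕ) : (fpoly n).coeff d =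
    if d ≤ (n - 1) / 2 then (pcount n ((n - 1) / 2 - d) : ℚ) else 0 := by
  rw [fpoly_eq, Polynomial.finset_sum_coeff]
  simp only [Polynomial.coeff_C_mul, Polynomial.coeff_X_pow]
  rw [Finset.sum_congr rfl (fun i _ => by rw [mul_ite, mul_one, mul_zero])]
  rw [Finset.sum_ite_eq (Finset.range ((n - 1) / 2 + 1)) d]
  simp [Finset.mem_range, Nat.lt_succ_iff]

/-! ### Main theorem -/

/-- Theorem 3.4 (odd case): for odd `n ≥ 3`,
`x·P_{n+1}(x) = (1 + x)·P_n(x) − (2/(n+1))·C(n−1, (n−1)/2)`. -/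
theorem fpoly_recurrence_odd (n : ℕ) (hn : 3 ≤ n) (hodd : Odd n) :
    Polynomial.X * fpoly (n + 1) =
      (1 + Polynomial.X) * fpoly n -
        Polynomial.C (2 / ((n : ℚ) + 1) * (Nat.choose (n - 1) ((n - 1) / 2) : ℚ)) := by
  obtain ⟨m, hm⟩ : ∃ m, n = 2 * m + 1 := by
    rcases hodd with ⟨m, hm⟩; exact ⟨m, by omega⟩
  subst hm
  have hm1 : 1 ≤ m := by omega
  have hmn : (2 * m + 1 - 1) / 2 = m := by omega
  have hmn' : (2 * m + 1 + 1 - 1) / 2 = m := by omega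
  have cf : ∀ d, (fpoly (2 * m + 1)).coeff d =
      if d ≤ m then (pcount (2 * m + 1) (m - d) : ℚ) else 0 := by
    intro d; rw [coeff_fpoly, hmn]
  have cf' : ∀ d, (fpoly (2 * m + 1 + 1)).coeff d =
      if d ≤ m then (pcount (2 * m + 1 + 1) (m - d) : ℚ) else 0 := by
    intro d; rw [coeff_fpoly, hmn']
  ext d
  rw [Polynomial.coeff_sub, one_add_mul, Polynomial.coeff_add, Polynomial.coeff_C]
  cases d with
  | zero =>
    rw [Polynomial.mul_coeff_zero, Polynomial.coeff_X_zero, zero_mul,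
        Polynomial.mul_coeff_zero, Polynomial.coeff_X_zero, zero_mul, cf 0,
        if_pos (Nat.zero_le m), Nat.sub_zero, if_pos rfl, hmn,
        show 2 * m + 1 - 1 = 2 * m by omega]
    have hpt := pcount_top hm1
    push_cast at hpt ⊢
    rw [hpt]; ring
  | succ d =>
    rw [Polynomial.coeff_X_mul, Polynomial.coeff_X_mul, cf' d, cf (d + 1), cf d,
        if_neg (Nat.succ_ne_zero d), sub_zero]
    rcases Nat.lt_or_ge d m with hd | hd
    · rw [if_pos (by omega : d + 1 ≤ m), if_pos (by omega : d ≤ m), if_pos (by omega : d ≤ m)]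
      have hrec := pcount_rec (n := 2 * m + 1) (i := m - d) (by omega) (by omega)
      rw [show m - (d + 1) = m - d - 1 by omega]
      push_cast [hrec]
      ring
    · rcases Nat.eq_or_lt_of_le hd with heq | hd'
      · rw [if_neg (by omega : ¬ (d + 1 ≤ m)), if_pos (by omega : d ≤ m), if_pos (by omega : d ≤ m),
          show m - d = 0 by omega, pcount_zero, pcount_zero]
        push_cast; ring
      · rw [if_neg (by omega : ¬ (d + 1 ≤ m)), if_neg (by omega : ¬ (d ≤ m)),
          if_neg (by omega : ¬ (d ≤ m))]
        ring
end

section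
/- Let n ≥ 3 and m ≥ 2. The number of multichains S_1 ⊆ S_2 ⊆ ... ⊆ S_{m−1} of length m−1 of elements of P_n (i.e., weakly increasing (m−1)-tuples of elements of P_n under inclusion) equals Σ_{i=0}^{⌊(n−1)/2⌋} p_{n,i−1} · (m−1)^i. (Equivalently, the zeta polynomial of P_n satisfies Z(P_n, m) = (m−1)^{⌊(n−1)/2⌋} · P_n(1/(m−1)).) -/
open Finset Polynomial

/-!
A set `S ⊆ [n]` is a peak set of a permutation of `[n]` iff `2 · #{t ∈ S | t ≤ s} < s` for every
`s ∈ S`. Necessity: a peak with value `s`, the other peaks with values below `s` and the neighbours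
of all of them occupy at least `2 · #{t ∈ S | t ≤ s} + 1` positions carrying values `≤ s`.
Sufficiency: with `S = {s₀ < ⋯ < s_{k-1}}` and `a₀ < a₁ < ⋯` the rest of `[n]`, the condition says
exactly `a_{j+1} < s_j`, so the word `a₀ s₀ a₁ s₁ ⋯ a_{k-1} s_{k-1} a_k ⋯ a_{n-k-1}` has peak
set `S`.

The condition passes to subsets, so `P_n` is a lower set. In a lower set a multichain
`S_1 ⊆ ⋯ ⊆ S_{m-1}` is the same as its top `S = S_{m-1} ∈ P_n` together with the colouring
`x ↦ min {j | x ∈ S_j}` of `S` by `m - 1` colours. Hence the count is `∑_{S ∈ P_n} (m-1)^{|S|}`,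
and grouping by `|S| ≤ ⌊(n-1)/2⌋` gives the claim.
-/

section Multichain

variable {α : Type*} {k : ℕ}

def sublevelChain (S : Finset α) (c : S → Fin (k + 1)) (j : Fin (k + 1)) : Finset α :=
  ({x | c x ≤ j} : Finset S).map (Function.Embedding.subtype _)

theorem mem_sublevelChain {S : Finset α} {c : S → Fin (k + 1)} {j : Fin (k + 1)} {x : α} :
    x ∈ sublevelChain S c j ↔ ∃ hx : x ∈ S, c ⟨x, hx⟩ ≤ j := by
  simp [sublevelChain]

theorem monotone_sublevelChain (S : Finset α) (c : S → Fin (k + 1)) :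
    Monotone (sublevelChain S c) := fun _ _ hij _ hx ↦ by
  obtain ⟨hxS, hcx⟩ := mem_sublevelChain.1 hx
  exact mem_sublevelChain.2 ⟨hxS, hcx.trans hij⟩

theorem sublevelChain_last (S : Finset α) (c : S → Fin (k + 1)) :
    sublevelChain S c (Fin.last k) = S := by
  ext x
  simp only [mem_sublevelChain, Fin.le_last, exists_prop, and_true]

theorem sublevelChain_injective (S : Finset α) :
    Function.Injective (sublevelChain (k := k) S) := by
  intro c c' h
  have key : ∀ (x : S) j, c x ≤ j ↔ c' x ≤ j := fun x j ↦ by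
    simpa [mem_sublevelChain] using congrArg (x.1 ∈ · j) h
  funext x
  exact le_antisymm ((key x _).2 le_rfl) ((key x _).1 le_rfl)

theorem exists_sublevelChain_eq {f : Fin (k + 1) → Finset α} (hf : Monotone f) :
    ∃ c, sublevelChain (f (Fin.last k)) c = f := by
  classical
  let entry (x : f (Fin.last k)) : Finset (Fin (k + 1)) := {j | x.1 ∈ f j}
  have hentry (x) : (entry x).Nonempty := ⟨Fin.last k, by simp [entry]⟩
  refine ⟨fun x ↦ (entry x).min' (hentry x), funext fun j ↦ Finset.ext fun x ↦ ?_⟩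
  rw [mem_sublevelChain]
  constructor
  · rintro ⟨hx, hle⟩
    have := Finset.min'_mem _ (hentry ⟨x, hx⟩)
    simp only [entry, Finset.mem_filter, Finset.mem_univ, true_and] at this
    exact hf hle this
  · intro hx
    exact ⟨hf (Fin.le_last j) hx, Finset.min'_le _ _ (by simpa [entry] using hx)⟩

theorem ncard_multichains_of_isLowerSet (𝒜 : Finset (Finset α))
    (h𝒜 : IsLowerSet (𝒜 : Set (Finset α))) :
    {f : Fin (k + 1) → Finset α | (∀ j, f j ∈ 𝒜) ∧ Monotone f}.ncard =
      ∑ S ∈ 𝒜, (k + 1) ^ #S := by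
  let chain (p : Σ S : 𝒜, (S.1 → Fin (k + 1))) : Fin (k + 1) → Finset α :=
    sublevelChain p.1.1 p.2
  have hrange : Set.range chain = {f | (∀ j, f j ∈ 𝒜) ∧ Monotone f} := by
    ext f
    constructor
    · rintro ⟨⟨⟨S, hS⟩, c⟩, rfl⟩
      refine ⟨fun j ↦ h𝒜 ?_ hS, monotone_sublevelChain S c⟩
      simpa only [sublevelChain_last] using monotone_sublevelChain S c (Fin.le_last j)
    · rintro ⟨hf𝒜, hf⟩
      obtain ⟨c, hc⟩ := exists_sublevelChain_eq hf
      exact ⟨⟨⟨_, hf𝒜 _⟩, c⟩, hc⟩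
  have hinj : Function.Injective chain := by
    rintro ⟨⟨S, hS⟩, c⟩ ⟨⟨S', hS'⟩, c'⟩ h
    obtain rfl : S = S' := by
      simpa only [chain, sublevelChain_last] using congrFun h (Fin.last k)
    obtain rfl := sublevelChain_injective S h
    rfl
  rw [← hrange, Set.ncard_range_of_injective hinj, Nat.card_sigma]
  simp only [Nat.card_fun, Nat.card_eq_fintype_card, Fintype.card_fin, Fintype.card_coe]
  exact Finset.sum_attach 𝒜 fun S ↦ (k + 1) ^ #S

end Multichain

theorem two_mul_card_lt_card_of_isolated {Q W : Finset ℕ} (hQ : Q.Nonempty) (h0 : 0 ∉ Q)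
    (hsep : ∀ q ∈ Q, q + 1 ∉ Q) (hW : ∀ q ∈ Q, q - 1 ∈ W ∧ q ∈ W ∧ q + 1 ∈ W) :
    2 * #Q < #W := by
  set q₀ := Q.min' hQ
  have hq₀ : 0 < q₀ := Nat.pos_of_ne_zero fun h ↦ h0 (h ▸ Q.min'_mem hQ)
  have hdisj : Disjoint Q (Q.image (· + 1)) := by
    simp only [disjoint_left, mem_image, not_exists, not_and]
    rintro q hq p hp rfl
    exact hsep p hp hq
  have hfresh : q₀ - 1 ∉ Q ∪ Q.image (· + 1) := by
    simp only [mem_union, mem_image, not_or, not_exists, not_and]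
    refine ⟨fun h ↦ ?_, fun p hp h ↦ ?_⟩
    · have := Q.min'_le _ h; omega
    · have := Q.min'_le _ hp; omega
  have hsub : insert (q₀ - 1) (Q ∪ Q.image (· + 1)) ⊆ W := by
    simp only [insert_subset_iff, union_subset_iff, image_subset_iff]
    exact ⟨(hW _ (Q.min'_mem hQ)).1, fun q hq ↦ (hW q hq).2.1, fun q hq ↦ (hW q hq).2.2⟩
  have := card_le_card hsub
  rw [card_insert_of_notMem hfresh, card_union_of_disjoint hdisj,
    card_image_of_injective _ (add_left_injective 1)] at this
  omega

section Enumeration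

variable (S : Finset ℕ) {j : ℕ}

theorem count_notMem_add_count_mem (m : ℕ) :
    Nat.count (· ∉ S) m + Nat.count (· ∈ S) m = m := by
  induction m with
  | zero => simp
  | succ m ih => by_cases hm : m ∈ S <;> simp [Nat.count_succ, hm] <;> omega

theorem count_mem_of_subset_range {m : ℕ} (hS : S ⊆ range m) : Nat.count (· ∈ S) m = #S := by
  rw [Nat.count_eq_card_filter_range, filter_mem_eq_inter, inter_eq_right.2 hS]

theorem card_filter_le_eq_count (s : ℕ) : #{t ∈ S | t ≤ s} = Nat.count (· ∈ S) (s + 1) := by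
  rw [Nat.count_eq_card_filter_range]
  congr 1
  ext t
  simp [and_comm]

variable {S}

theorem nth_mem_finset (hj : j < #S) : Nat.nth (· ∈ S) j ∈ S :=
  Nat.nth_mem_of_lt_card S.finite_toSet (by simpa using hj)

theorem exists_lt_card_nth_mem_finset_eq {v : ℕ} (hv : v ∈ S) :
    ∃ j < #S, Nat.nth (· ∈ S) j = v := by
  simpa using Nat.exists_lt_card_finite_nth_eq S.finite_toSet hv

theorem count_nth_mem_finset (hj : j < #S) : Nat.count (· ∈ S) (Nat.nth (· ∈ S) j) = j :=
  Nat.count_nth_of_lt_card_finite S.finite_toSet (by simpa using hj)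

theorem card_filter_le_nth_mem_finset (hj : j < #S) :
    #{t ∈ S | t ≤ Nat.nth (· ∈ S) j} = j + 1 := by
  rw [card_filter_le_eq_count, Nat.count_succ_eq_succ_count_iff.2 (nth_mem_finset hj),
    count_nth_mem_finset hj]

theorem strictMono_nth_notMem : StrictMono (Nat.nth (· ∉ S)) :=
  Nat.nth_strictMono S.finite_toSet.infinite_compl

end Enumeration

/-- The word `a₀ s₀ a₁ s₁ ⋯ a_{k-1} s_{k-1} a_k a_{k+1} ⋯`, read from position `1`, where
`s₀ < ⋯ < s_{k-1}` enumerate `S` and `aⱼ = Nat.nth (· ∉ S) (j + 1)`; when `0 ∉ S` the `aⱼ` are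
the positive integers outside `S`, in increasing order. -/
noncomputable def interleave (S : Finset ℕ) (i : ℕ) : ℕ :=
  if i ≤ 2 * #S then
    if Even i then Nat.nth (· ∈ S) (i / 2 - 1) else Nat.nth (· ∉ S) (i / 2 + 1)
  else Nat.nth (· ∉ S) (i - #S)

section Interleave

variable {S : Finset ℕ} {j : ℕ}

theorem interleave_two_mul_add_one (hj : j ≤ #S) :
    interleave S (2 * j + 1) = Nat.nth (· ∉ S) (j + 1) := by
  unfold interleave
  split_ifs with h h'
  · exact absurd h' (by simp [parity_simps])
  · congr 1; omega
  · congr 1; omega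

theorem interleave_two_mul_add_two (hj : j < #S) :
    interleave S (2 * j + 2) = Nat.nth (· ∈ S) j := by
  unfold interleave
  rw [if_pos (by omega), if_pos (by simp [parity_simps])]
  congr 1; omega

theorem interleave_add_card_add_one (hj : #S ≤ j) :
    interleave S (j + #S + 1) = Nat.nth (· ∉ S) (j + 1) := by
  unfold interleave
  rw [if_neg (by omega)]
  congr 1; omega

end Interleave

theorem position_trichotomy (k : ℕ) {i : ℕ} (hi : 1 ≤ i) :
    (∃ j < k, i = 2 * j + 2) ∨ (∃ j < k, i = 2 * j + 1) ∨ ∃ j, k ≤ j ∧ i = j + k + 1 := by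
  by_cases hik : i ≤ 2 * k
  · obtain ⟨m, rfl | rfl⟩ := Nat.even_or_odd' i
    · exact Or.inl ⟨m - 1, by omega, by omega⟩
    · exact Or.inr (Or.inl ⟨m, by omega, rfl⟩)
  · exact Or.inr (Or.inr ⟨i - k - 1, by omega, by omega⟩)

def PeakAdmissible (n : ℕ) (S : Finset ℕ) : Prop :=
  S ⊆ Icc 1 n ∧ ∀ s ∈ S, 2 * #{t ∈ S | t ≤ s} < s

theorem PeakAdmissible.mono {n : ℕ} {S T : Finset ℕ} (hS : PeakAdmissible n S) (hTS : T ⊆ S) :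
    PeakAdmissible n T :=
  ⟨hTS.trans hS.1, fun s hs ↦
    (Nat.mul_le_mul_left 2 (card_le_card (filter_subset_filter _ hTS))).trans_lt (hS.2 s (hTS hs))⟩

theorem PeakAdmissible.two_mul_card_le {n : ℕ} {S : Finset ℕ} (hS : PeakAdmissible n S) :
    2 * #S ≤ n - 1 := by
  obtain rfl | hne := S.eq_empty_or_nonempty
  · simp
  have hmax := hS.2 _ (S.max'_mem hne)
  rw [filter_true_of_mem fun t ht ↦ S.le_max' t ht] at hmax
  have := (mem_Icc.1 (hS.1 (S.max'_mem hne))).2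
  omega

section Peaks

variable {n : ℕ} {σ : ℕ → ℕ}

theorem CP_subset_Icc (hσ : IsPermOn n σ) : CP n σ ⊆ Icc 1 n := by
  simp only [CP, image_subset_iff, mem_filter, mem_Icc, and_imp]
  intro i h2i hin _ _
  exact Set.mem_Icc.1 (hσ.mapsTo (Set.mem_Icc.2 ⟨by omega, by omega⟩))

theorem IsPermOn.card_filter_le (hσ : IsPermOn n σ) {s : ℕ} (hs : s ≤ n) :
    #{i ∈ Icc 1 n | σ i ≤ s} = s := by
  refine (card_nbij (t := Icc 1 s) σ (fun i hi ↦ ?_) (hσ.injOn.mono fun i hi ↦ ?_)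
    fun v hv ↦ ?_).trans (by simp)
  · simp only [coe_filter, mem_Icc, Set.mem_ofPred_eq] at hi
    simpa using ⟨(hσ.mapsTo (Set.mem_Icc.2 hi.1)).1, hi.2⟩
  · simpa using (mem_filter.1 hi).1
  · simp only [coe_Icc, Set.mem_Icc] at hv
    obtain ⟨i, hi, rfl⟩ := hσ.surjOn (Set.mem_Icc.2 ⟨hv.1, hv.2.trans hs⟩)
    exact ⟨i, by simpa using ⟨Set.mem_Icc.1 hi, hv.2⟩, rfl⟩

theorem peakAdmissible_CP (hσ : IsPermOn n σ) : PeakAdmissible n (CP n σ) := by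
  refine ⟨CP_subset_Icc hσ, fun s hs ↦ ?_⟩
  set Q := {i ∈ Icc 2 (n - 1) | (σ (i - 1) < σ i ∧ σ (i + 1) < σ i) ∧ σ i ≤ s}
  have hsn : s ≤ n := (mem_Icc.1 (CP_subset_Icc hσ hs)).2
  have hcard : #{t ∈ CP n σ | t ≤ s} = #Q := by
    rw [CP, filter_image, filter_filter]
    refine card_image_of_injOn (hσ.injOn.mono fun i hi ↦ ?_)
    simp only [coe_filter, mem_Icc, Set.mem_ofPred_eq] at hi
    exact Set.mem_Icc.2 ⟨by omega, by omega⟩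
  rw [hcard, ← hσ.card_filter_le hsn]
  refine two_mul_card_lt_card_of_isolated ?_ ?_ ?_ ?_
  · obtain ⟨i, hi, rfl⟩ := mem_image.1 hs
    exact ⟨i, mem_filter.2 ⟨(mem_filter.1 hi).1, (mem_filter.1 hi).2, le_rfl⟩⟩
  · simp [Q]
  · intro q hq hq1
    simp only [Q, mem_filter, add_tsub_cancel_right] at hq hq1
    omega
  · intro q hq
    simp only [Q, mem_filter, mem_Icc] at hq ⊢
    omega

end Peaks

namespace PeakAdmissible

variable {n j : ℕ} {S : Finset ℕ}

theorem zero_notMem (hS : PeakAdmissible n S) : 0 ∉ S := fun h ↦ by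
  simpa using hS.1 h

theorem two_mul_lt_nth_mem (hS : PeakAdmissible n S) (hj : j < #S) :
    2 * (j + 1) < Nat.nth (· ∈ S) j := by
  simpa [card_filter_le_nth_mem_finset hj] using hS.2 _ (nth_mem_finset hj)

theorem nth_notMem_lt_nth_mem (hS : PeakAdmissible n S) (hj : j < #S) :
    Nat.nth (· ∉ S) (j + 2) < Nat.nth (· ∈ S) j := by
  refine Nat.nth_lt_of_lt_count ?_
  have := count_notMem_add_count_mem S (Nat.nth (· ∈ S) j)
  have := hS.two_mul_lt_nth_mem hj
  rw [count_nth_mem_finset hj] at *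
  omega

theorem count_notMem (hS : PeakAdmissible n S) :
    Nat.count (· ∉ S) (n + 1) = n + 1 - #S := by
  have hrange : S ⊆ range (n + 1) := fun s hs ↦ by
    simpa [Nat.lt_succ_iff] using (mem_Icc.1 (hS.1 hs)).2
  have := count_notMem_add_count_mem S (n + 1)
  rw [count_mem_of_subset_range S hrange] at this
  omega

theorem nth_notMem_mem_Icc (hS : PeakAdmissible n S) (hj : j < n - #S) :
    Nat.nth (· ∉ S) (j + 1) ∈ Icc 1 n := by
  have hpos : Nat.nth (· ∉ S) 0 < Nat.nth (· ∉ S) (j + 1) :=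
    strictMono_nth_notMem (Nat.succ_pos j)
  have hle : Nat.nth (· ∉ S) (j + 1) < n + 1 :=
    Nat.nth_lt_of_lt_count (by rw [hS.count_notMem]; omega)
  exact mem_Icc.2 ⟨by omega, by omega⟩

theorem exists_nth_notMem_eq (hS : PeakAdmissible n S) {v : ℕ} (hv : v ∈ Icc 1 n)
    (hvS : v ∉ S) : ∃ j < n - #S, Nat.nth (· ∉ S) (j + 1) = v := by
  rw [mem_Icc] at hv
  have h1 : 1 ≤ Nat.count (· ∉ S) v := by
    have := Nat.count_monotone (· ∉ S) hv.1
    simpa [Nat.count_one, hS.zero_notMem] using this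
  have h2 : Nat.count (· ∉ S) v < n + 1 - #S := by
    rw [← hS.count_notMem]
    exact Nat.count_strict_mono hvS (by omega)
  refine ⟨Nat.count (· ∉ S) v - 1, by omega, ?_⟩
  rw [Nat.sub_add_cancel h1]
  exact Nat.nth_count hvS

theorem isPermOn_interleave (hS : PeakAdmissible n S) : IsPermOn n (interleave S) := by
  have hk := hS.two_mul_card_le
  have hmaps : Set.MapsTo (interleave S) (Set.Icc 1 n) (Set.Icc 1 n) := by
    intro i hi
    rw [Set.mem_Icc] at hi
    rw [← coe_Icc, mem_coe]
    rcases position_trichotomy #S hi.1 with ⟨j, hj, rfl⟩ | ⟨j, hj, rfl⟩ | ⟨j, hj, rfl⟩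
    · rw [interleave_two_mul_add_two hj]
      exact hS.1 (nth_mem_finset hj)
    · rw [interleave_two_mul_add_one hj.le]
      exact hS.nth_notMem_mem_Icc (by omega)
    · rw [interleave_add_card_add_one hj]
      exact hS.nth_notMem_mem_Icc (by omega)
  refine (Set.finite_Icc 1 n).surjOn_iff_bijOn_of_mapsTo hmaps |>.1 fun v hv ↦ ?_
  rw [← coe_Icc, mem_coe] at hv
  by_cases hvS : v ∈ S
  · obtain ⟨j, hj, rfl⟩ := exists_lt_card_nth_mem_finset_eq hvS
    have := hS.two_mul_lt_nth_mem hj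
    have := (mem_Icc.1 hv).2
    exact ⟨2 * j + 2, Set.mem_Icc.2 ⟨by omega, by omega⟩, interleave_two_mul_add_two hj⟩
  · obtain ⟨j, hj, rfl⟩ := hS.exists_nth_notMem_eq hv hvS
    rcases lt_or_ge j #S with hjk | hjk
    · exact ⟨2 * j + 1, Set.mem_Icc.2 ⟨by omega, by omega⟩, interleave_two_mul_add_one hjk.le⟩
    · exact ⟨j + #S + 1, Set.mem_Icc.2 ⟨by omega, by omega⟩, interleave_add_card_add_one hjk⟩

theorem CP_interleave (hS : PeakAdmissible n S) : CP n (interleave S) = S := by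
  ext v
  simp only [CP, mem_image, mem_filter, mem_Icc]
  constructor
  · rintro ⟨i, ⟨⟨h2i, hin⟩, hleft, hright⟩, rfl⟩
    rcases position_trichotomy #S (by omega : 1 ≤ i) with ⟨j, hj, rfl⟩ | ⟨j, hj, rfl⟩ | ⟨j, hj, rfl⟩
    · rw [interleave_two_mul_add_two hj]
      exact nth_mem_finset hj
    · obtain ⟨j, rfl⟩ : ∃ j', j = j' + 1 := ⟨j - 1, by omega⟩
      rw [show 2 * (j + 1) + 1 - 1 = 2 * j + 2 by omega, interleave_two_mul_add_two (by omega),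
        interleave_two_mul_add_one hj.le] at hleft
      exact absurd (hS.nth_notMem_lt_nth_mem (by omega)) hleft.not_gt
    · rw [show j + #S + 1 + 1 = (j + 1) + #S + 1 by omega, interleave_add_card_add_one (by omega),
        interleave_add_card_add_one hj] at hright
      exact absurd (strictMono_nth_notMem (by omega : j + 1 < j + 1 + 1)) hright.not_gt
  · intro hv
    obtain ⟨j, hj, rfl⟩ := exists_lt_card_nth_mem_finset_eq hv
    have hsn := (mem_Icc.1 (hS.1 hv)).2
    have := hS.two_mul_lt_nth_mem hj
    have hpeak := hS.nth_notMem_lt_nth_mem hj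
    refine ⟨2 * j + 2, ⟨⟨by omega, by omega⟩, ?_, ?_⟩, interleave_two_mul_add_two hj⟩
    · rw [show 2 * j + 2 - 1 = 2 * j + 1 by omega, interleave_two_mul_add_one hj.le,
        interleave_two_mul_add_two hj]
      exact (strictMono_nth_notMem (by omega : j + 1 < j + 2)).trans hpeak
    · rw [show 2 * j + 2 + 1 = 2 * (j + 1) + 1 by omega, interleave_two_mul_add_one hj,
        interleave_two_mul_add_two hj]
      exact hpeak

end PeakAdmissible

theorem mem_Pn_iff {n : ℕ} {S : Finset ℕ} : S ∈ Pn n ↔ PeakAdmissible n S := by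
  classical
  rw [Pn, mem_filter, mem_powerset]
  constructor
  · rintro ⟨-, σ, hσ, rfl⟩
    exact peakAdmissible_CP hσ
  · intro hS
    exact ⟨hS.1, interleave S, hS.isPermOn_interleave, hS.CP_interleave⟩

theorem isLowerSet_Pn (n : ℕ) : IsLowerSet (Pn n : Set (Finset ℕ)) := fun _ _ hTS hS ↦
  mem_Pn_iff.2 ((mem_Pn_iff.1 hS).mono hTS)

theorem card_le_of_mem_Pn {n : ℕ} {S : Finset ℕ} (hS : S ∈ Pn n) : #S ≤ (n - 1) / 2 :=
  (Nat.le_div_iff_mul_le two_pos).2 (by linarith [(mem_Pn_iff.1 hS).two_mul_card_le])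

theorem Pn_zeta_polynomial_general (n m : ℕ) (hm : 2 ≤ m) :
    Set.ncard {f : Fin (m - 1) → Finset ℕ |
        (∀ j, f j ∈ Pn n) ∧ ∀ j k : Fin (m - 1), j ≤ k → f j ⊆ f k} =
      ∑ i ∈ Finset.range ((n - 1) / 2 + 1), pcount n i * (m - 1) ^ i := by
  obtain ⟨k, rfl⟩ : ∃ k, m = k + 2 := ⟨m - 2, by omega⟩
  calc _ = ∑ S ∈ Pn n, (k + 1) ^ #S := ncard_multichains_of_isLowerSet _ (isLowerSet_Pn n)
    _ = ∑ i ∈ range ((n - 1) / 2 + 1), ∑ S ∈ Pn n with #S = i, (k + 1) ^ #S :=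
      (sum_fiberwise_of_maps_to (fun S hS ↦ mem_range.2 (Nat.lt_succ_of_le (card_le_of_mem_Pn hS)))
        _).symm
    _ = _ := sum_congr rfl fun i _ ↦ by
      rw [sum_congr rfl fun S hS ↦ by rw [(mem_filter.1 hS).2], sum_const, smul_eq_mul, pcount]
      rfl

/-- Corollary 3.5: for `m ≥ 2`, the number of multichains
`S_1 ⊆ S_2 ⊆ … ⊆ S_{m−1}` in `P_n` equals `Σ_{i=0}^{⌊(n−1)/2⌋} p_{n,i−1}·(m−1)^i`,
i.e. `Z(P_n, m) = (m−1)^{⌊(n−1)/2⌋}·P_n(1/(m−1))`. -/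
theorem Pn_zeta_polynomial (n m : ℕ) (hn : 3 ≤ n) (hm : 2 ≤ m) :
    Set.ncard {f : Fin (m - 1) → Finset ℕ |
        (∀ j, f j ∈ Pn n) ∧ ∀ j k : Fin (m - 1), j ≤ k → f j ⊆ f k} =
      ∑ i ∈ Finset.range ((n - 1) / 2 + 1), pcount n i * (m - 1) ^ i :=
  Pn_zeta_polynomial_general n m hm
end

section
/- Let n ≥ 3 and let (h_{n,0}, h_{n,1}, ..., h_{n,⌊(n−1)/2⌋}) be the h-vector of P_n, defined by the polynomial identity P_n(x−1) = Σ_{i=0}^{⌊(n−1)/2⌋} h_{n,i} x^{⌊(n−1)/2⌋ − i}, where P_n(x) is the f-polynomial of P_n. Then for every 0 ≤ i ≤ ⌊(n−1)/2⌋, h_{n,i} = ((⌊n/2⌋ − i)/(⌊n/2⌋ + i)) · C(⌊n/2⌋ + i, ⌊n/2⌋). -/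
open Finset Polynomial

/-!
A set `S ⊆ [n]` is a circular peak set iff every `v ∈ S` exceeds twice the number of elements
of `S` that are `≤ v`. Necessity: the `k` peaks of value `≤ v`, their left neighbours and the
right neighbour of the last of them are `2k + 1` positions carrying distinct values `≤ v`.
Sufficiency: insert the values `1, 2, …, n` one by one as new maxima, a value `v ∈ S` at
position `2 #{s ∈ S | s ≤ v}` and any other value at the end. Keeping the tail behind the last
peak increasing, each insertion of a value of `S` creates exactly one new peak and destroys none.

Sorting admissible sets by whether they contain `n` gives Pascal-type recursions, whose solution
is that there are `C(n, k) - 2 C(n - 1, k - 1)` admissible `k`-sets for `1 ≤ k ≤ n/2`. With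
`m = ⌊n/2⌋` and `d = ⌊(n-1)/2⌋` the claimed `h`-vector is `h_i = C(m + i, m) - 2 C(m + i - 1, m)`,
and the identity `P_n(x) = ∑ h_i (x + 1)^(d - i)` reduces coefficientwise to the convolution
`∑_{i + l = j} C(a + i, a) C(b + l, b) = C(a + b + 1 + j, j)`, i.e. to
`(1 - x)^-(a+1) (1 - x)^-(b+1) = (1 - x)^-(a+b+2)`.
-/

def peakPositions (n : ℕ) (σ : ℕ → ℕ) : Finset ℕ :=
  {i ∈ Icc 2 (n - 1) | σ (i - 1) < σ i ∧ σ (i + 1) < σ i}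

lemma mem_peakPositions {n i : ℕ} {σ : ℕ → ℕ} :
    i ∈ peakPositions n σ ↔ i ∈ Icc 2 (n - 1) ∧ σ (i - 1) < σ i ∧ σ (i + 1) < σ i :=
  mem_filter

lemma CP_eq_image_peakPositions (n : ℕ) (σ : ℕ → ℕ) : CP n σ = (peakPositions n σ).image σ := rfl

def IsPeakAdmissible (S : Finset ℕ) : Prop :=
  ∀ v ∈ S, 2 * #{s ∈ S | s ≤ v} < v

instance : DecidablePred IsPeakAdmissible := fun S => by
  unfold IsPeakAdmissible; infer_instance

lemma isPeakAdmissible_empty : IsPeakAdmissible ∅ := fun v hv => absurd hv (notMem_empty v)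

lemma isPeakAdmissible_insert_iff {T : Finset ℕ} {N : ℕ} (hT : ∀ x ∈ T, x < N) :
    IsPeakAdmissible (insert N T) ↔ IsPeakAdmissible T ∧ 2 * (#T + 1) < N := by
  have hN : N ∉ T := fun h => (hT N h).false
  have hbelow : ∀ v ∈ T, {s ∈ insert N T | s ≤ v} = {s ∈ T | s ≤ v} := fun v hv => by
    rw [filter_insert, if_neg (not_le.2 (hT v hv))]
  have htop : {s ∈ insert N T | s ≤ N} = insert N T :=
    filter_true_of_mem fun s hs => (mem_insert.1 hs).elim le_of_eq fun h => (hT s h).le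
  rw [IsPeakAdmissible, forall_mem_insert, htop, card_insert_of_notMem hN, and_comm]
  exact and_congr_left' (forall₂_congr fun v hv => by rw [hbelow v hv])

lemma two_mul_card_lt_of_subset_peakPositions {n v : ℕ} {σ : ℕ → ℕ} (hσ : IsPermOn n σ)
    {P : Finset ℕ} (hP : P.Nonempty) (hPpeak : P ⊆ peakPositions n σ) (hPv : ∀ i ∈ P, σ i ≤ v) :
    2 * #P < v := by
  have hpeak : ∀ i ∈ P, 2 ≤ i ∧ i ≤ n - 1 ∧ σ (i - 1) < σ i ∧ σ (i + 1) < σ i ∧ σ i ≤ v :=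
    fun i hi => by have := mem_peakPositions.1 (hPpeak hi); grind [hPv i hi]
  have hmax := hpeak _ (P.max'_mem hP)
  -- Pairwise disjoint pieces, since two adjacent positions cannot both be peaks.
  set Q := P ∪ P.image (· - 1) ∪ {P.max' hP + 1}
  have hdisj₁ : Disjoint P (P.image (· - 1)) := by
    refine disjoint_left.2 fun i hi hi' => ?_
    obtain ⟨j, hj, rfl⟩ := mem_image.1 hi'
    have := hpeak _ hi
    have := hpeak _ hj
    grind
  have hdisj₂ : Disjoint (P ∪ P.image (· - 1)) {P.max' hP + 1} := by
    refine disjoint_singleton_right.2 fun h => ?_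
    rcases mem_union.1 h with h | h
    · exact absurd (P.le_max' _ h) (by omega)
    · obtain ⟨j, hj, hj'⟩ := mem_image.1 h
      have := P.le_max' _ hj
      have := hpeak _ hj
      omega
  have hcardQ : #Q = 2 * #P + 1 := by
    rw [card_union_of_disjoint hdisj₂, card_union_of_disjoint hdisj₁, card_singleton,
      card_image_of_injOn fun i hi j hj (h : i - 1 = j - 1) => by
        have := hpeak i hi; have := hpeak j hj; omega]
    ring
  have hQ : ∀ q ∈ Q, q ∈ Set.Icc 1 n ∧ σ q ≤ v := by
    intro q hq
    simp only [Q, mem_union, mem_image, mem_singleton] at hq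
    rcases hq with (hq | ⟨j, hj, rfl⟩) | rfl
    · have := hpeak q hq; exact ⟨⟨by omega, by omega⟩, by omega⟩
    · have := hpeak j hj; exact ⟨⟨by omega, by omega⟩, by omega⟩
    · exact ⟨⟨by omega, by omega⟩, by omega⟩
  have : #Q ≤ #(Icc 1 v) := card_le_card_of_injOn σ
    (fun q hq => mem_Icc.2 ⟨(hσ.mapsTo (hQ q hq).1).1, (hQ q hq).2⟩)
    (hσ.injOn.mono fun q hq => (hQ q hq).1)
  rw [Nat.card_Icc] at this
  omega

theorem isPeakAdmissible_CP {n : ℕ} {σ : ℕ → ℕ} (hσ : IsPermOn n σ) :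
    IsPeakAdmissible (CP n σ) := by
  intro v hv
  rw [CP_eq_image_peakPositions, filter_image,
    card_image_of_injOn (hσ.injOn.mono fun i hi => ?_)]
  · obtain ⟨i, hi, rfl⟩ := mem_image.1 hv
    exact two_mul_card_lt_of_subset_peakPositions hσ ⟨i, mem_filter.2 ⟨hi, le_rfl⟩⟩
      (filter_subset _ _) fun j hj => (mem_filter.1 hj).2
  · have := (mem_peakPositions.1 (mem_filter.1 hi).1).1
    grind

lemma IsPermOn.one_le_apply_and_apply_le {n : ℕ} {σ : ℕ → ℕ} (hσ : IsPermOn n σ) (i : ℕ)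
    (h1 : 1 ≤ i) (hn : i ≤ n) : 1 ≤ σ i ∧ σ i ≤ n :=
  hσ.mapsTo ⟨h1, hn⟩

def insertAt (σ : ℕ → ℕ) (p N i : ℕ) : ℕ :=
  if i < p then σ i else if i = p then N else σ (i - 1)

lemma isPermOn_insertAt {n p : ℕ} {σ : ℕ → ℕ} (hσ : IsPermOn n σ)
    (hp : p ∈ Set.Icc 1 (n + 1)) : IsPermOn (n + 1) (insertAt σ p (n + 1)) := by
  have hmaps : Set.MapsTo (insertAt σ p (n + 1)) (Set.Icc 1 (n + 1)) (Set.Icc 1 (n + 1)) := by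
    rintro i ⟨hi1, hi⟩
    have := hσ.one_le_apply_and_apply_le i
    have := hσ.one_le_apply_and_apply_le (i - 1)
    simp only [insertAt, Set.mem_Icc]
    split_ifs <;> grind
  refine ((Set.finite_Icc 1 (n + 1)).surjOn_iff_bijOn_of_mapsTo hmaps).1 ?_
  rintro y ⟨hy1, hy⟩
  rcases hy.eq_or_lt with rfl | hy
  · exact ⟨p, hp, by simp [insertAt]⟩
  obtain ⟨j, ⟨hj1, hj⟩, rfl⟩ := hσ.surjOn ⟨hy1, Nat.le_of_lt_succ hy⟩
  by_cases hjp : j < p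
  · exact ⟨j, ⟨hj1, by omega⟩, by simp [insertAt, hjp]⟩
  · exact ⟨j + 1, ⟨by omega, by omega⟩, by simp [insertAt]; grind⟩

lemma peakPositions_insertAt_succ {n : ℕ} {σ : ℕ → ℕ} (hσ : IsPermOn n σ) :
    peakPositions (n + 1) (insertAt σ (n + 1) (n + 1)) = peakPositions n σ := by
  ext i
  have := hσ.one_le_apply_and_apply_le i
  simp only [peakPositions, mem_filter]
  simp only [mem_Icc, insertAt]
  split_ifs <;> grind

lemma peakPositions_insertAt {n p : ℕ} {σ : ℕ → ℕ} (hσ : IsPermOn n σ) (hp2 : 2 ≤ p)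
    (hpn : p ≤ n) (hmono : StrictMonoOn σ (Set.Icc (p - 1) n)) :
    peakPositions (n + 1) (insertAt σ p (n + 1)) = insert p (peakPositions n σ) := by
  have hlt : ∀ a b, p - 1 ≤ a → a < b → b ≤ n → σ a < σ b := fun a b ha hab hb =>
    hmono ⟨ha, by omega⟩ ⟨by omega, hb⟩ hab
  ext i
  have := hσ.one_le_apply_and_apply_le (i - 1)
  have := hσ.one_le_apply_and_apply_le i
  have := hlt i (i + 1)
  have := hlt (i - 1) i
  clear hlt hmono
  simp only [peakPositions, mem_insert, mem_filter]
  simp only [mem_Icc, insertAt]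
  split_ifs <;> grind

lemma strictMonoOn_insertAt_succ {n a : ℕ} {σ : ℕ → ℕ} (hσ : IsPermOn n σ) (ha : 1 ≤ a)
    (hmono : StrictMonoOn σ (Set.Icc a n)) :
    StrictMonoOn (insertAt σ (n + 1) (n + 1)) (Set.Icc a (n + 1)) := by
  rintro i ⟨hai, hi⟩ j ⟨haj, hj⟩ hij
  have := hσ.one_le_apply_and_apply_le i
  have := @hmono i ⟨hai, by omega⟩ j
  simp only [insertAt, Set.mem_Icc] at *
  split_ifs <;> grind

lemma strictMonoOn_insertAt {n p : ℕ} {σ : ℕ → ℕ} (N : ℕ)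
    (hmono : StrictMonoOn σ (Set.Icc p n)) :
    StrictMonoOn (insertAt σ p N) (Set.Icc (p + 1) (n + 1)) := by
  rintro i ⟨hpi, hi⟩ j ⟨hpj, hj⟩ hij
  simp only [insertAt, if_neg (show ¬i < p by omega), if_neg (show ¬j < p by omega),
    if_neg (show i ≠ p by omega), if_neg (show j ≠ p by omega)]
  exact hmono ⟨by omega, by omega⟩ ⟨by omega, by omega⟩ (by omega)

lemma CP_insertAt_succ {n : ℕ} {σ : ℕ → ℕ} (hσ : IsPermOn n σ) :
    CP (n + 1) (insertAt σ (n + 1) (n + 1)) = CP n σ := by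
  rw [CP_eq_image_peakPositions, CP_eq_image_peakPositions, peakPositions_insertAt_succ hσ]
  refine image_congr fun i hi => ?_
  have : i < n + 1 := by have := (mem_peakPositions.1 hi).1; grind
  simp [insertAt, this]

lemma CP_insertAt {n p : ℕ} {σ : ℕ → ℕ} (hσ : IsPermOn n σ) (hp2 : 2 ≤ p) (hpn : p ≤ n)
    (hmono : StrictMonoOn σ (Set.Icc (p - 1) n)) :
    CP (n + 1) (insertAt σ p (n + 1)) = insert (n + 1) (CP n σ) := by
  rw [CP_eq_image_peakPositions, CP_eq_image_peakPositions,
    peakPositions_insertAt hσ hp2 hpn hmono, image_insert,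
    show insertAt σ p (n + 1) p = n + 1 by simp [insertAt]]
  refine congrArg _ (image_congr fun i hi => ?_)
  obtain ⟨hi, -, hpeak⟩ := mem_peakPositions.1 hi
  rw [mem_Icc] at hi
  have : i < p := by
    by_contra! h
    exact (hmono ⟨by omega, by omega⟩ ⟨by omega, by omega⟩ (Nat.lt_succ_self i)).asymm hpeak
  simp [insertAt, this]

theorem exists_isPermOn_CP_eq {n : ℕ} {S : Finset ℕ} (hS : S ⊆ Icc 1 n)
    (hadm : IsPeakAdmissible S) :
    ∃ σ, IsPermOn n σ ∧ CP n σ = S ∧ StrictMonoOn σ (Set.Icc (2 * #S + 1) n) := by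
  induction n generalizing S with
  | zero =>
    obtain rfl : S = ∅ := subset_empty.1 (by simpa using hS)
    refine ⟨id, ?_, ?_, ?_⟩
    · simp [IsPermOn]
    · simp [CP]
    · exact strictMono_id.strictMonoOn _
  | succ n ih =>
    have hsub : ∀ T ⊆ S, n + 1 ∉ T → T ⊆ Icc 1 n := fun T hT hnT x hx => by
      have := mem_Icc.1 (hS (hT hx))
      exact mem_Icc.2 ⟨this.1, Nat.le_of_lt_succ (this.2.lt_of_ne fun h => hnT (h ▸ hx))⟩
    by_cases hmem : n + 1 ∈ S
    · set S' := S.erase (n + 1)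
      have hS' : S' ⊆ Icc 1 n := hsub S' (erase_subset _ _) (notMem_erase _ _)
      have hlt : ∀ x ∈ S', x < n + 1 := fun x hx => Nat.lt_succ_of_le (mem_Icc.1 (hS' hx)).2
      rw [← insert_erase hmem, isPeakAdmissible_insert_iff hlt] at hadm
      obtain ⟨σ, hσ, hCP, hmono⟩ := ih hS' hadm.1
      rw [← insert_erase hmem, card_insert_of_notMem (notMem_erase _ _)]
      have hmono' : StrictMonoOn σ (Set.Icc (2 * #S' + 2 - 1) n) := by simpa using hmono
      refine ⟨insertAt σ (2 * #S' + 2) (n + 1), isPermOn_insertAt hσ ⟨by omega, by omega⟩,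
        ?_, ?_⟩
      · rw [CP_insertAt hσ (by omega) (by omega) hmono', hCP]
      · exact strictMonoOn_insertAt _ (hmono.mono (Set.Icc_subset_Icc_left (by omega)))
    · obtain ⟨σ, hσ, hCP, hmono⟩ := ih (hsub S subset_rfl hmem) hadm
      exact ⟨_, isPermOn_insertAt hσ ⟨by omega, le_rfl⟩, (CP_insertAt_succ hσ).trans hCP,
        strictMonoOn_insertAt_succ hσ (by omega) hmono⟩

theorem mem_Pn {n : ℕ} {S : Finset ℕ} : S ∈ Pn n ↔ S ⊆ Icc 1 n ∧ IsPeakAdmissible S := by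
  simp only [Pn, mem_filter, mem_powerset]
  refine and_congr_right fun hS => ⟨?_, fun hadm => ?_⟩
  · rintro ⟨σ, hσ, rfl⟩
    exact isPeakAdmissible_CP hσ
  · obtain ⟨σ, hσ, hCP, -⟩ := exists_isPermOn_CP_eq hS hadm
    exact ⟨σ, hσ, hCP⟩

def admissibleCount (n k : ℕ) : ℕ :=
  #{S ∈ powersetCard k (Icc 1 n) | IsPeakAdmissible S}

lemma pcount_eq_admissibleCount (n k : ℕ) : pcount n k = admissibleCount n k := by
  rw [pcount, admissibleCount]
  congr 1
  ext S
  simp only [mem_filter, mem_Pn, mem_powersetCard]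
  tauto

lemma admissibleCount_zero (n : ℕ) : admissibleCount n 0 = 1 := by
  rw [admissibleCount, powersetCard_zero, filter_singleton,
    if_pos isPeakAdmissible_empty, card_singleton]

lemma admissibleCount_eq_zero_of_lt {n k : ℕ} (h : n < 2 * k) : admissibleCount n k = 0 := by
  refine card_eq_zero.2 (filter_eq_empty_iff.2 fun S hS hadm => ?_)
  obtain ⟨hsub, rfl⟩ := mem_powersetCard.1 hS
  have hne : S.Nonempty := card_pos.1 (by omega)
  have := hadm _ (S.max'_mem hne)
  rw [filter_true_of_mem fun x hx => S.le_max' x hx] at this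
  have := (mem_Icc.1 (hsub (S.max'_mem hne))).2
  omega

lemma admissibleCount_succ_succ (n k : ℕ) :
    admissibleCount (n + 1) (k + 1) =
      admissibleCount n (k + 1) + if 2 * (k + 1) < n + 1 then admissibleCount n k else 0 := by
  have hnotMem : n + 1 ∉ Icc 1 n := by simp
  have hlt : ∀ T ∈ powersetCard k (Icc 1 n), ∀ x ∈ T, x < n + 1 := fun T hT x hx =>
    Nat.lt_succ_of_le (mem_Icc.1 ((mem_powersetCard.1 hT).1 hx)).2
  have hinj : Set.InjOn (insert (n + 1)) (powersetCard k (Icc 1 n) : Set (Finset ℕ)) :=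
    fun T hT U hU h => by
      rw [← erase_insert fun hn => (hlt T hT _ hn).false, h,
        erase_insert fun hn => (hlt U hU _ hn).false]
  have hdisj : Disjoint {S ∈ powersetCard (k + 1) (Icc 1 n) | IsPeakAdmissible S}
      {S ∈ (powersetCard k (Icc 1 n)).image (insert (n + 1)) | IsPeakAdmissible S} := by
    refine disjoint_left.2 fun S hS hS' => hnotMem ?_
    obtain ⟨T, -, rfl⟩ := mem_image.1 (mem_filter.1 hS').1
    exact (mem_powersetCard.1 (mem_filter.1 hS).1).1 (mem_insert_self _ _)
  rw [admissibleCount, ← insert_Icc_right_eq_Icc_add_one (by omega),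
    powersetCard_succ_insert hnotMem, filter_union, card_union_of_disjoint hdisj, filter_image,
    card_image_of_injOn (hinj.mono (filter_subset _ _)), admissibleCount]
  congr 1
  rw [filter_congr fun T hT => by
    rw [isPeakAdmissible_insert_iff (hlt T hT), (mem_powersetCard.1 hT).2]]
  split_ifs with h
  · simp only [h, and_true, admissibleCount]
  · simp [h]

theorem admissibleCount_succ_add_two_mul_choose {n k : ℕ} (h : 2 * (k + 1) ≤ n + 1) :
    admissibleCount (n + 1) (k + 1) + 2 * n.choose k = (n + 1).choose (k + 1) := by
  induction n generalizing k with
  | zero => omega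
  | succ n ih =>
    rw [admissibleCount_succ_succ, Nat.choose_succ_succ' (n + 1)]
    rcases h.lt_or_eq with h | h
    · have ih₁ := ih (k := k) (by omega)
      rw [if_pos h]
      cases k with
      | zero =>
        simp only [zero_add, admissibleCount_zero, Nat.choose_zero_right, Nat.choose_one_right]
          at ih₁ ⊢
        omega
      | succ k =>
        have ih₂ := ih (k := k) (by omega)
        have := Nat.choose_succ_succ' n k
        omega
    · obtain rfl : n = 2 * k := by omega
      rw [if_neg (by omega), admissibleCount_eq_zero_of_lt (by omega), Nat.choose_symm_half]
      omega

theorem sum_antidiagonal_choose_mul_choose (a b j : ℕ) :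
    ∑ p ∈ antidiagonal j, (a + p.1).choose a * (b + p.2).choose b = (a + b + 1 + j).choose j := by
  have h := congrArg (PowerSeries.coeff j ∘ Units.val)
    (PowerSeries.invOneSubPow_add ℤ (a + 1) (b + 1))
  simp only [Function.comp_apply, Units.val_mul, PowerSeries.coeff_mul,
    PowerSeries.invOneSubPow_val_succ_eq_mk_add_choose, PowerSeries.coeff_mk,
    show a + 1 + (b + 1) = a + b + 1 + 1 by ring] at h
  rw [Nat.choose_symm_add] at h
  exact_mod_cast h.symm

noncomputable def hVector (m i : ℕ) : ℚ :=
  ((m : ℚ) - i) / ((m : ℚ) + i) * (m + i).choose m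

lemma hVector_zero {m : ℕ} (hm : m ≠ 0) : hVector m 0 = 1 := by
  simp [hVector, hm]

lemma hVector_succ (m i : ℕ) :
    hVector m (i + 1) = (m + i + 1).choose m - 2 * (m + i).choose m := by
  have h := Nat.add_one_mul_choose_eq (m + i) i
  rw [← Nat.choose_symm_add, show m + i + 1 = m + (i + 1) by ring, ← Nat.choose_symm_add] at h
  have hq : ((m + i + 1 : ℕ) : ℚ) * (m + i).choose m = (m + i + 1).choose m * (i + 1) := by
    exact_mod_cast h
  rw [hVector, ← add_assoc, div_mul_eq_mul_div, div_eq_iff (by positivity)]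
  push_cast at hq ⊢
  linear_combination 2 * hq

lemma sum_antidiagonal_hVector_mul_choose {m : ℕ} (hm : m ≠ 0) (e k : ℕ) :
    ∑ p ∈ antidiagonal (k + 1), hVector m p.1 * ((e + p.2).choose e : ℚ) =
      (m + e + 1 + (k + 1)).choose (k + 1) - 2 * (m + e + 1 + k).choose k := by
  have hsucc := sum_antidiagonal_choose_mul_choose m e (k + 1)
  have hk := sum_antidiagonal_choose_mul_choose m e k
  rw [Nat.sum_antidiagonal_succ] at hsucc
  rw [Nat.sum_antidiagonal_succ, hVector_zero hm]
  simp only [hVector_succ, sub_mul, sum_sub_distrib, mul_assoc, ← mul_sum]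
  rw [← Nat.cast_inj (R := ℚ)] at hsucc hk
  push_cast at hsucc hk
  simp only [add_zero, Nat.choose_self, Nat.cast_one, one_mul, ← add_assoc] at hsucc ⊢
  rw [← hsucc, ← hk]
  ring

section
variable {R : Type*} [Semiring R]

lemma coeff_sum_C_mul_X_pow_sub (c : ℕ → R) (d t : ℕ) :
    (∑ i ∈ range (d + 1), C (c i) * X ^ (d - i)).coeff t = if t ≤ d then c (d - t) else 0 := by
  simp only [finsetSum_coeff, coeff_C_mul, coeff_X_pow]
  split_ifs with ht
  · rw [sum_eq_single (d - t)] <;> intros <;> grind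
  · exact sum_eq_zero fun i hi => by grind

lemma coeff_sum_C_mul_X_add_one_pow_sub (c : ℕ → R) {d j : ℕ} (hj : j ≤ d) :
    (∑ i ∈ range (d + 1), C (c i) * (X + 1) ^ (d - i)).coeff (d - j) =
      ∑ p ∈ antidiagonal j, c p.1 * ((d - j + p.2).choose (d - j) : R) := by
  simp only [finsetSum_coeff, coeff_C_mul, coeff_X_add_one_pow]
  rw [Nat.sum_antidiagonal_eq_sum_range_succ_mk]
  symm
  refine sum_subset_zero_on_sdiff (range_subset_range.2 (by omega)) (fun i hi => ?_)
    (fun i hi => ?_)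
  · rw [mem_sdiff, mem_range, mem_range] at hi
    rw [Nat.choose_eq_zero_of_lt (by omega), Nat.cast_zero, mul_zero]
  · rw [mem_range] at hi
    rw [show d - j + (j - i) = d - i by omega]

lemma coeff_sum_C_mul_X_add_one_pow_sub_of_lt (c : ℕ → R) {d t : ℕ} (ht : d < t) :
    (∑ i ∈ range (d + 1), C (c i) * (X + 1) ^ (d - i)).coeff t = 0 := by
  simp only [finsetSum_coeff, coeff_C_mul, coeff_X_add_one_pow]
  exact sum_eq_zero fun i _ => by rw [Nat.choose_eq_zero_of_lt (by omega), Nat.cast_zero, mul_zero]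

end

lemma sum_C_mul_X_add_one_pow_comp {R : Type*} [CommRing R] (c : ℕ → R) (d : ℕ) :
    (∑ i ∈ range (d + 1), C (c i) * (X + 1) ^ (d - i)).comp (X - 1) =
      ∑ i ∈ range (d + 1), C (c i) * X ^ (d - i) := by
  simp

theorem fpoly_eq_sum_hVector_mul_X_add_one_pow {n : ℕ} (hn : 2 ≤ n) :
    fpoly n = ∑ i ∈ range ((n - 1) / 2 + 1),
      C (hVector (n / 2) i) * (X + 1) ^ ((n - 1) / 2 - i) := by
  set d := (n - 1) / 2
  have hm : n / 2 ≠ 0 := by omega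
  ext t
  rw [fpoly, coeff_sum_C_mul_X_pow_sub]
  split_ifs with ht
  · obtain ⟨j, hj, rfl⟩ : ∃ j ≤ d, t = d - j := ⟨d - t, by omega, by omega⟩
    rw [coeff_sum_C_mul_X_add_one_pow_sub _ hj, Nat.sub_sub_self hj, pcount_eq_admissibleCount]
    cases j with
    | zero => simp [hVector_zero hm, admissibleCount_zero]
    | succ k =>
      have key := admissibleCount_succ_add_two_mul_choose
        (n := n / 2 + (d - (k + 1)) + 1 + k) (k := k) (by omega)
      rw [show n / 2 + (d - (k + 1)) + 1 + k + 1 = n by omega] at key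
      rw [sum_antidiagonal_hVector_mul_choose hm,
        show n / 2 + (d - (k + 1)) + 1 + (k + 1) = n by omega, ← key]
      push_cast
      ring
  · rw [coeff_sum_C_mul_X_add_one_pow_sub_of_lt _ (not_le.1 ht)]

/-- Corollary 3.7/3.8: the h-vector of `P_n`, defined by
`P_n(x−1) = Σ_{i=0}^{⌊(n−1)/2⌋} h_{n,i} x^{⌊(n−1)/2⌋−i}`, is given by
`h_{n,i} = ((⌊n/2⌋ − i)/(⌊n/2⌋ + i))·C(⌊n/2⌋ + i, ⌊n/2⌋)`. -/
theorem Pn_h_vector (n : ℕ) (hn : 3 ≤ n) (h : ℕ → ℚ)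
    (hdef : (fpoly n).comp (Polynomial.X - 1) =
      ∑ i ∈ Finset.range ((n - 1) / 2 + 1),
        Polynomial.C (h i) * Polynomial.X ^ ((n - 1) / 2 - i)) :
    ∀ i : ℕ, i ≤ (n - 1) / 2 →
      h i = (((n / 2 : ℕ) : ℚ) - (i : ℚ)) / (((n / 2 : ℕ) : ℚ) + (i : ℚ)) *
        (Nat.choose (n / 2 + i) (n / 2) : ℚ) := by
  intro i hi
  have hcoeffs : ∑ i ∈ range ((n - 1) / 2 + 1), C (h i) * X ^ ((n - 1) / 2 - i) =
      ∑ i ∈ range ((n - 1) / 2 + 1), C (hVector (n / 2) i) * X ^ ((n - 1) / 2 - i) := by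
    rw [← hdef, fpoly_eq_sum_hVector_mul_X_add_one_pow (by omega), sum_C_mul_X_add_one_pow_comp]
  have := congrArg (coeff · ((n - 1) / 2 - i)) hcoeffs
  simp only [coeff_sum_C_mul_X_pow_sub, if_pos (Nat.sub_le _ i), Nat.sub_sub_self hi] at this
  exact this
end
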